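/- Let A be a (possibly infinite) generalized Cartan matrix. Then: (1) the centre of 𝔤'(A) equals 𝔠'(A) = {h ∈ 𝔥'(A) : α_i(h) = 0 for all i ∈ I}; (2) if A is indecomposable, then every proper Q-graded ideal of 𝔤'(A) is contained in the centre 𝔠'(A). -/

import Mathlib

open scoped Pointwise Classical

namespace KM

/-- a (possibly infinite) generalized Cartan matrix -/
structure IsGCM {I : Type*} (A : I → I → ℤ) : Prop where
  diag : ∀ i, A i i = 2
  offDiag : ∀ i j, i ≠ j → A i j ≤ 0
  zero_iff : ∀ i j, A i j = 0 ↔ A j i = 0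

/-- an indecomposable matrix: the index set admits no splitting into two nonempty parts
with all entries between them equal to zero -/
def IsIndecomposable {I : Type*} (A : I → I → ℤ) : Prop :=
  ∀ s : Set I, s.Nonempty → sᶜ.Nonempty → ∃ i ∈ s, ∃ j ∈ sᶜ, A i j ≠ 0

variable (I : Type*) (A : I → I → ℤ)
variable (L : Type*) [LieRing L] [LieAlgebra ℂ L]

/-- Axiomatization of the derived Kac-Moody algebra 𝔤'(A) of a (possibly infinite)
generalized Cartan matrix A: it is generated by Chevalley generators e_i, f_i, α_i^∨
subject to the defining relations, it is graded by the free abelian group Q on the α_i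
(realized as I →₀ ℤ), its zero graded piece is 𝔥'(A) = span of the coroots, and every
Q-graded ideal intersecting 𝔥'(A) trivially is zero (which characterizes the quotient of
𝔤̃'(A) by its unique maximal Q-graded ideal intersecting 𝔥'(A) trivially). -/
structure DerivedKMData where
  e : I → L
  f : I → L
  coroot : I → L
  grading : (I →₀ ℤ) → Submodule ℂ L
  rel_hh : ∀ i j, ⁅coroot i, coroot j⁆ = 0
  rel_ef_eq : ∀ i, ⁅e i, f i⁆ = coroot i
  rel_ef_ne : ∀ i j, i ≠ j → ⁅e i, f j⁆ = 0
  rel_he : ∀ i j, ⁅coroot i, e j⁆ = (A i j : ℂ) • e j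
  rel_hf : ∀ i j, ⁅coroot i, f j⁆ = -(A i j : ℂ) • f j
  generates : LieSubalgebra.lieSpan ℂ L
    (Set.range e ∪ Set.range f ∪ Set.range coroot) = ⊤
  e_mem : ∀ i, e i ∈ grading (Finsupp.single i 1)
  f_mem : ∀ i, f i ∈ grading (-Finsupp.single i 1)
  grading_zero : grading 0 = Submodule.span ℂ (Set.range coroot)
  grading_bracket : ∀ q q' : I →₀ ℤ, ∀ x ∈ grading q, ∀ y ∈ grading q',
    ⁅x, y⁆ ∈ grading (q + q')
  grading_internal : DirectSum.IsInternal grading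
  graded_simple : ∀ J : LieIdeal ℂ L,
    (J.toSubmodule = ⨆ q : I →₀ ℤ, J.toSubmodule ⊓ grading q) →
    J.toSubmodule ⊓ grading 0 = ⊥ → J = ⊥

variable {I A L}

/-- a Q-graded ideal -/
def DerivedKMData.IsGradedIdeal (D : DerivedKMData I A L) (J : LieIdeal ℂ L) : Prop :=
  J.toSubmodule = ⨆ q : I →₀ ℤ, J.toSubmodule ⊓ D.grading q

end KM

/-!
The centre is a graded ideal, because brackets with the homogeneous generators shift degrees, so
the components of a central element are central. A graded ideal `J` whose components of degree
`±αᵢ` vanish lies in `𝔥'`: its part in nonzero degrees is then stable under the generators, hence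
a graded ideal meeting `𝔥'` trivially, hence zero. For the centre this gives one inclusion of (1);
conversely an element of `𝔥'` killed by every `αᵢ` commutes with all generators.

For (2) let `J` be a proper graded ideal. If some `h ∈ J ∩ 𝔥'` had `αᵢ(h) ≠ 0`, then `eᵢ ∈ J`, and
by indecomposability all generators would lie in `J`; so `J ∩ 𝔥'` is central. The triangular
decomposition `𝔤' = 𝔫₊ + 𝔥' + 𝔫₋` shows `𝔤'_{αᵢ} = ℂ eᵢ`, and for `v = c eᵢ ∈ J` the element
`[fᵢ, v] ∈ J ∩ 𝔥'` is central, so `2v = [eᵢ, [fᵢ, v]] = 0`; the Chevalley involution gives the same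
for `-αᵢ`. Hence `J ⊆ 𝔥'`, and `J` is central.
-/

namespace KM.DerivedKMData

variable {I : Type*} {A : I → I → ℤ} {L : Type*} [LieRing L] [LieAlgebra ℂ L]
variable (D : DerivedKMData I A L)

theorem induction_on {p : L → Prop} (x : L) (e : ∀ i, p (D.e i)) (f : ∀ i, p (D.f i))
    (coroot : ∀ i, p (D.coroot i)) (zero : p 0) (add : ∀ x y, p x → p y → p (x + y))
    (smul : ∀ (c : ℂ) x, p x → p (c • x)) (lie : ∀ x y, p x → p y → p ⁅x, y⁆) : p x := by
  have hx : x ∈ LieSubalgebra.lieSpan ℂ L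
      (Set.range D.e ∪ Set.range D.f ∪ Set.range D.coroot) :=
    D.generates ▸ LieSubalgebra.mem_top x
  induction hx using LieSubalgebra.lieSpan_induction with
  | mem x hx =>
    rcases hx with (⟨i, rfl⟩ | ⟨i, rfl⟩) | ⟨i, rfl⟩
    exacts [e i, f i, coroot i]
  | zero => exact zero
  | add x y _ _ hx hy => exact add x y hx hy
  | smul c x _ hx => exact smul c x hx
  | lie x y _ _ hx hy => exact lie x y hx hy

theorem lie_mem_of_lie_generators_mem (V : Submodule ℂ L)
    (he : ∀ i, ∀ v ∈ V, ⁅D.e i, v⁆ ∈ V) (hf : ∀ i, ∀ v ∈ V, ⁅D.f i, v⁆ ∈ V)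
    (hh : ∀ i, ∀ v ∈ V, ⁅D.coroot i, v⁆ ∈ V) (x : L) {v : L} (hv : v ∈ V) : ⁅x, v⁆ ∈ V := by
  induction x using D.induction_on generalizing v with
  | e i => exact he i v hv
  | f i => exact hf i v hv
  | coroot i => exact hh i v hv
  | zero => simp
  | add x y hx hy => rw [add_lie]; exact V.add_mem (hx hv) (hy hv)
  | smul c x hx => rw [smul_lie]; exact V.smul_mem c (hx hv)
  | lie x y hx hy => rw [lie_lie]; exact V.sub_mem (hx (hy hv)) (hy (hx hv))

theorem eq_top_of_generators_mem (V : Submodule ℂ L) (he_mem : ∀ i, D.e i ∈ V)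
    (hf_mem : ∀ i, D.f i ∈ V) (hh_mem : ∀ i, D.coroot i ∈ V)
    (he : ∀ i, ∀ v ∈ V, ⁅D.e i, v⁆ ∈ V) (hf : ∀ i, ∀ v ∈ V, ⁅D.f i, v⁆ ∈ V)
    (hh : ∀ i, ∀ v ∈ V, ⁅D.coroot i, v⁆ ∈ V) : V = ⊤ := by
  refine Submodule.eq_top_iff'.2 fun x => ?_
  induction x using D.induction_on with
  | e i => exact he_mem i
  | f i => exact hf_mem i
  | coroot i => exact hh_mem i
  | zero => exact V.zero_mem
  | add x y hx hy => exact V.add_mem hx hy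
  | smul c x hx => exact V.smul_mem c hx
  | lie x y _ hy => exact D.lie_mem_of_lie_generators_mem V he hf hh x hy

theorem mem_center_of_lie_generators_eq_zero {z : L} (he : ∀ i, ⁅D.e i, z⁆ = 0)
    (hf : ∀ i, ⁅D.f i, z⁆ = 0) (hh : ∀ i, ⁅D.coroot i, z⁆ = 0) :
    z ∈ LieAlgebra.center ℂ L := by
  rw [LieModule.mem_maxTrivSubmodule]
  intro x
  induction x using D.induction_on with
  | e i => exact he i
  | f i => exact hf i
  | coroot i => exact hh i
  | zero => exact zero_lie z
  | add x y hx hy => rw [add_lie, hx, hy, add_zero]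
  | smul c x hx => rw [smul_lie, hx, smul_zero]
  | lie x y hx hy => rw [lie_lie, hx, hy, lie_zero, lie_zero, sub_zero]

theorem coroot_mem_grading_zero (i : I) : D.coroot i ∈ D.grading 0 :=
  D.grading_zero ▸ Submodule.subset_span ⟨i, rfl⟩

theorem lie_eq_zero_of_mem_grading_zero {h h' : L} (hh : h ∈ D.grading 0)
    (hh' : h' ∈ D.grading 0) : ⁅h, h'⁆ = 0 := by
  rw [D.grading_zero] at hh hh'
  induction hh using Submodule.span_induction with
  | mem x hx =>
    obtain ⟨i, rfl⟩ := hx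
    induction hh' using Submodule.span_induction with
    | mem y hy => obtain ⟨j, rfl⟩ := hy; exact D.rel_hh i j
    | zero => exact lie_zero _
    | add x y _ _ hx hy => rw [lie_add, hx, hy, add_zero]
    | smul c x _ hx => rw [lie_smul, hx, smul_zero]
  | zero => exact zero_lie _
  | add x y _ _ hx hy => rw [add_lie, hx, hy, add_zero]
  | smul c x _ hx => rw [smul_lie, hx, smul_zero]

/-- `c` is the value `αⱼ(h)` of the simple root on `h ∈ 𝔥'`. -/
theorem exists_lie_e_eq_smul {h : L} (hh : h ∈ D.grading 0) (j : I) :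
    ∃ c : ℂ, ⁅h, D.e j⁆ = c • D.e j ∧ ⁅h, D.f j⁆ = -(c • D.f j) := by
  rw [D.grading_zero] at hh
  induction hh using Submodule.span_induction with
  | mem x hx =>
    obtain ⟨i, rfl⟩ := hx
    exact ⟨A i j, D.rel_he i j, by rw [D.rel_hf i j, neg_smul]⟩
  | zero => exact ⟨0, by simp⟩
  | add x y _ _ hx hy =>
    obtain ⟨c, hce, hcf⟩ := hx
    obtain ⟨d, hde, hdf⟩ := hy
    exact ⟨c + d, by rw [add_lie, hce, hde, add_smul],
      by rw [add_lie, hcf, hdf, add_smul, neg_add]⟩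
  | smul a x _ hx =>
    obtain ⟨c, hce, hcf⟩ := hx
    exact ⟨a * c, by rw [smul_lie, hce, smul_smul],
      by rw [smul_lie, hcf, smul_neg, smul_smul]⟩

theorem lie_coroot_f_self (hA : IsGCM A) (i : I) :
    ⁅D.coroot i, D.f i⁆ = -(2 : ℂ) • D.f i := by
  rw [D.rel_hf, hA.diag]
  norm_num

theorem f_eq_zero_of_e_eq_zero (hA : IsGCM A) {i : I} (he : D.e i = 0) : D.f i = 0 := by
  have h : D.coroot i = 0 := by rw [← D.rel_ef_eq, he, zero_lie]
  have := D.lie_coroot_f_self hA i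
  rw [h, zero_lie] at this
  simpa using this.symm

theorem mem_center_of_mem_grading_zero (hA : IsGCM A) {z : L} (hz : z ∈ D.grading 0)
    (hze : ∀ i, ⁅z, D.e i⁆ = 0) : z ∈ LieAlgebra.center ℂ L := by
  refine D.mem_center_of_lie_generators_eq_zero (fun i => by rw [← lie_skew, hze, neg_zero])
    (fun i => ?_) (fun i => D.lie_eq_zero_of_mem_grading_zero (D.coroot_mem_grading_zero i) hz)
  obtain ⟨c, hce, hcf⟩ := D.exists_lie_e_eq_smul hz i
  rcases smul_eq_zero.1 (hce.symm.trans (hze i)) with hc | he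
  · rw [← lie_skew, hcf, hc, zero_smul, neg_zero, neg_zero]
  · rw [D.f_eq_zero_of_e_eq_zero hA he, zero_lie]

/-- The Chevalley involution `e ↦ f, f ↦ e, α^∨ ↦ -α^∨` turns `D` into a presentation of the
same algebra with the grading reversed. -/
noncomputable def op : DerivedKMData I A L where
  e := D.f
  f := D.e
  coroot i := -D.coroot i
  grading q := D.grading (-q)
  rel_hh i j := by rw [neg_lie, lie_neg, neg_neg, D.rel_hh]
  rel_ef_eq i := by rw [← lie_skew, D.rel_ef_eq]
  rel_ef_ne i j hij := by rw [← lie_skew, D.rel_ef_ne j i (Ne.symm hij), neg_zero]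
  rel_he i j := by rw [neg_lie, D.rel_hf, neg_smul, neg_neg]
  rel_hf i j := by rw [neg_lie, D.rel_he, neg_smul]
  generates := by
    rw [eq_top_iff, ← D.generates, LieSubalgebra.lieSpan_le]
    rintro _ ((⟨i, rfl⟩ | ⟨i, rfl⟩) | ⟨i, rfl⟩)
    · exact LieSubalgebra.subset_lieSpan (Or.inl (Or.inr ⟨i, rfl⟩))
    · exact LieSubalgebra.subset_lieSpan (Or.inl (Or.inl ⟨i, rfl⟩))
    · rw [← neg_neg (D.coroot i)]
      exact neg_mem (LieSubalgebra.subset_lieSpan (Or.inr ⟨i, rfl⟩))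
  e_mem := D.f_mem
  f_mem i := by rw [neg_neg]; exact D.e_mem i
  grading_zero := by
    rw [neg_zero, D.grading_zero, ← Submodule.span_neg]
    congr 1
    ext x
    simp [neg_eq_iff_eq_neg]
  grading_bracket q q' x hx y hy := by rw [neg_add]; exact D.grading_bracket _ _ x hx y hy
  grading_internal := by
    rw [DirectSum.isInternal_submodule_iff_iSupIndep_and_iSup_eq_top]
    exact ⟨D.grading_internal.submodule_iSupIndep.comp neg_injective,
      (Equiv.neg _).iSup_comp.trans D.grading_internal.submodule_iSup_eq_top⟩
  graded_simple J hJ h0 := by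
    refine D.graded_simple J ?_ (by rwa [neg_zero] at h0)
    exact hJ.trans ((Equiv.neg _).iSup_comp (g := fun q => J.toSubmodule ⊓ D.grading q))

theorem op_grading_zero : D.op.grading 0 = D.grading 0 := by
  simp only [op, neg_zero]

noncomputable def proj (q : I →₀ ℤ) : L →ₗ[ℂ] L :=
  letI := D.grading_internal.chooseDecomposition
  (D.grading q).subtype ∘ₗ DirectSum.component ℂ (I →₀ ℤ) (fun q => D.grading q) q ∘ₗ
    (DirectSum.decomposeLinearEquiv D.grading).toLinearMap

theorem proj_mem (q : I →₀ ℤ) (x : L) : D.proj q x ∈ D.grading q :=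
  SetLike.coe_mem _

theorem proj_apply_of_mem_same {q : I →₀ ℤ} {x : L} (hx : x ∈ D.grading q) :
    D.proj q x = x :=
  let := D.grading_internal.chooseDecomposition
  DirectSum.decompose_of_mem_same D.grading hx

theorem proj_apply_of_mem_ne {p q : I →₀ ℤ} {x : L} (hx : x ∈ D.grading p) (hpq : p ≠ q) :
    D.proj q x = 0 :=
  let := D.grading_internal.chooseDecomposition
  DirectSum.decompose_of_mem_ne D.grading hx hpq

theorem mem_iSup_inf_grading_of_proj_mem (V : Submodule ℂ L) {x : L}
    (hx : ∀ q, D.proj q x ∈ V) : x ∈ ⨆ q, V ⊓ D.grading q := by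
  let := D.grading_internal.chooseDecomposition
  rw [← DirectSum.sum_support_decompose D.grading x]
  exact Submodule.sum_mem _ fun q _ => Submodule.mem_iSup_of_mem q ⟨hx q, D.proj_mem q x⟩

theorem lie_proj {g : L} {p : I →₀ ℤ} (hg : g ∈ D.grading p) (q : I →₀ ℤ) (x : L) :
    ⁅g, D.proj q x⁆ = D.proj (p + q) ⁅g, x⁆ := by
  have hx : x ∈ ⨆ r, D.grading r := by
    rw [D.grading_internal.submodule_iSup_eq_top]; exact Submodule.mem_top
  induction hx using Submodule.iSup_induction' with
  | mem r y hy =>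
    have hgy := D.grading_bracket _ _ _ hg _ hy
    by_cases hrq : r = q
    · subst hrq
      rw [D.proj_apply_of_mem_same hy, D.proj_apply_of_mem_same hgy]
    · rw [D.proj_apply_of_mem_ne hy hrq, lie_zero,
        D.proj_apply_of_mem_ne hgy fun h => hrq (add_left_cancel h)]
  | zero => simp
  | add x y _ _ hx hy => rw [map_add, lie_add, hx, hy, lie_add, map_add]

theorem proj_mem_center {z : L} (hz : z ∈ LieAlgebra.center ℂ L) (q : I →₀ ℤ) :
    D.proj q z ∈ LieAlgebra.center ℂ L := by
  rw [LieModule.mem_maxTrivSubmodule] at hz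
  apply D.mem_center_of_lie_generators_eq_zero <;> intro i
  · rw [D.lie_proj (D.e_mem i), hz, map_zero]
  · rw [D.lie_proj (D.f_mem i), hz, map_zero]
  · rw [D.lie_proj (D.coroot_mem_grading_zero i), hz, map_zero]

theorem isGradedIdeal_center : D.IsGradedIdeal (LieAlgebra.center ℂ L) :=
  le_antisymm (fun _ hz => D.mem_iSup_inf_grading_of_proj_mem _ (D.proj_mem_center hz))
    (iSup_le fun _ => inf_le_left)

theorem eq_bot_of_isGradedIdeal_of_le (J : LieIdeal ℂ L) (hJ : D.IsGradedIdeal J)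
    (h : J.toSubmodule ≤ ⨆ q : {q : I →₀ ℤ // q ≠ 0}, D.grading q) : J = ⊥ := by
  refine D.graded_simple J hJ (disjoint_iff.mp ?_)
  have := (D.grading_internal.submodule_iSupIndep 0).symm
  rw [iSup_subtype'] at this
  exact this.mono_left h

def nonzeroDegreePart (J : LieIdeal ℂ L) : Submodule ℂ L :=
  ⨆ q : {q : I →₀ ℤ // q ≠ 0}, J.toSubmodule ⊓ D.grading q

theorem inf_grading_le_nonzeroDegreePart (J : LieIdeal ℂ L) {q : I →₀ ℤ} (hq : q ≠ 0) :
    J.toSubmodule ⊓ D.grading q ≤ D.nonzeroDegreePart J :=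
  le_iSup (fun q : {q : I →₀ ℤ // q ≠ 0} => J.toSubmodule ⊓ D.grading q) ⟨q, hq⟩

theorem lie_mem_nonzeroDegreePart (J : LieIdeal ℂ L) {g : L} {p : I →₀ ℤ}
    (hg : g ∈ D.grading p) (hgJ : ∀ v ∈ J, v ∈ D.grading (-p) → ⁅g, v⁆ = 0) {v : L}
    (hv : v ∈ D.nonzeroDegreePart J) : ⁅g, v⁆ ∈ D.nonzeroDegreePart J := by
  induction hv using Submodule.iSup_induction' with
  | mem q y hy =>
    by_cases hpq : p + q.1 = 0
    · rw [hgJ y hy.1 (neg_eq_of_add_eq_zero_right hpq ▸ hy.2)]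
      exact Submodule.zero_mem _
    · exact D.inf_grading_le_nonzeroDegreePart J hpq
        ⟨J.lie_mem hy.1, D.grading_bracket _ _ _ hg _ hy.2⟩
  | zero => rw [lie_zero]; exact Submodule.zero_mem _
  | add x y _ _ hx hy => rw [lie_add]; exact Submodule.add_mem _ hx hy

theorem nonzeroDegreePart_eq_bot (J : LieIdeal ℂ L)
    (he : ∀ i, ∀ v ∈ J, v ∈ D.grading (-Finsupp.single i 1) → ⁅D.e i, v⁆ = 0)
    (hf : ∀ i, ∀ v ∈ J, v ∈ D.grading (Finsupp.single i 1) → ⁅D.f i, v⁆ = 0) :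
    D.nonzeroDegreePart J = ⊥ := by
  have hh : ∀ i, ∀ v ∈ J, v ∈ D.grading (-0) → ⁅D.coroot i, v⁆ = 0 := fun i v _ hv =>
    D.lie_eq_zero_of_mem_grading_zero (D.coroot_mem_grading_zero i) (by rwa [neg_zero] at hv)
  let M : LieIdeal ℂ L :=
    { D.nonzeroDegreePart J with
      lie_mem := fun {x _} hv => D.lie_mem_of_lie_generators_mem _
        (fun i _ => D.lie_mem_nonzeroDegreePart J (D.e_mem i) (he i))
        (fun i _ => D.lie_mem_nonzeroDegreePart J (D.f_mem i) (by simpa only [neg_neg] using hf i))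
        (fun i _ => D.lie_mem_nonzeroDegreePart J (D.coroot_mem_grading_zero i) (hh i)) x hv }
  have hM : M = ⊥ := by
    refine D.eq_bot_of_isGradedIdeal_of_le M ?_ (iSup_mono fun q => inf_le_right)
    refine le_antisymm (iSup_le fun q => le_iSup_of_le q.1 ?_) (iSup_le fun _ => inf_le_left)
    exact le_inf (D.inf_grading_le_nonzeroDegreePart J q.2) inf_le_right
  exact congrArg LieSubmodule.toSubmodule hM

theorem le_grading_zero_of_isGradedIdeal (J : LieIdeal ℂ L) (hJ : D.IsGradedIdeal J)
    (he : ∀ i, ∀ v ∈ J, v ∈ D.grading (-Finsupp.single i 1) → ⁅D.e i, v⁆ = 0)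
    (hf : ∀ i, ∀ v ∈ J, v ∈ D.grading (Finsupp.single i 1) → ⁅D.f i, v⁆ = 0) :
    J.toSubmodule ≤ D.grading 0 := by
  rw [hJ]
  refine iSup_le fun q => ?_
  rcases eq_or_ne q 0 with rfl | hq
  · exact inf_le_right
  · exact (D.inf_grading_le_nonzeroDegreePart J hq).trans
      ((D.nonzeroDegreePart_eq_bot J he hf).le.trans bot_le)

theorem center_eq (hA : IsGCM A) :
    (LieAlgebra.center ℂ L : Set L) = {z : L | z ∈ D.grading 0 ∧ ∀ i, ⁅z, D.e i⁆ = 0} := by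
  ext z
  refine ⟨fun hz => ⟨?_, fun i => ?_⟩, fun hz => D.mem_center_of_mem_grading_zero hA hz.1 hz.2⟩
  · have hcentral : ∀ x, ∀ v ∈ LieAlgebra.center ℂ L, ⁅x, v⁆ = 0 := fun x v hv =>
      (LieModule.mem_maxTrivSubmodule _ _ _ _).1 hv x
    exact D.le_grading_zero_of_isGradedIdeal _ D.isGradedIdeal_center
      (fun i v hv _ => hcentral _ v hv) (fun i v hv _ => hcentral _ v hv) hz
  · rw [← lie_skew, (LieModule.mem_maxTrivSubmodule _ _ _ _).1 hz, neg_zero]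

def nPlus : LieSubalgebra ℂ L := LieSubalgebra.lieSpan ℂ L (Set.range D.e)

def nMinus : LieSubalgebra ℂ L := LieSubalgebra.lieSpan ℂ L (Set.range D.f)

theorem op_nPlus : D.op.nPlus = D.nMinus := rfl

theorem op_nMinus : D.op.nMinus = D.nPlus := rfl

theorem e_mem_nPlus (i : I) : D.e i ∈ D.nPlus := LieSubalgebra.subset_lieSpan ⟨i, rfl⟩

theorem lie_mem_nPlus_of_mem_grading_zero {h x : L} (hh : h ∈ D.grading 0)
    (hx : x ∈ D.nPlus) : ⁅h, x⁆ ∈ D.nPlus := by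
  induction hx using LieSubalgebra.lieSpan_induction with
  | mem x hx =>
    obtain ⟨j, rfl⟩ := hx
    obtain ⟨c, hc, -⟩ := D.exists_lie_e_eq_smul hh j
    exact hc ▸ D.nPlus.smul_mem c (D.e_mem_nPlus j)
  | zero => rw [lie_zero]; exact D.nPlus.zero_mem
  | add x y _ _ hx hy => rw [lie_add]; exact D.nPlus.add_mem hx hy
  | smul c x _ hx => rw [lie_smul]; exact D.nPlus.smul_mem c hx
  | lie x y hx' hy' hx hy =>
    rw [leibniz_lie]
    exact D.nPlus.add_mem (D.nPlus.lie_mem hx hy') (D.nPlus.lie_mem hx' hy)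

theorem lie_mem_nPlus_of_mem_sup {a y : L} (ha : a ∈ D.grading 0 ⊔ D.nPlus.toSubmodule)
    (hy : y ∈ D.nPlus) : ⁅a, y⁆ ∈ D.nPlus := by
  obtain ⟨h, hh, n, hn, rfl⟩ := Submodule.mem_sup.1 ha
  rw [add_lie]
  exact D.nPlus.add_mem (D.lie_mem_nPlus_of_mem_grading_zero hh hy) (D.nPlus.lie_mem hn hy)

theorem lie_f_mem_sup_nPlus (j : I) {x : L} (hx : x ∈ D.nPlus) :
    ⁅D.f j, x⁆ ∈ D.grading 0 ⊔ D.nPlus.toSubmodule := by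
  induction hx using LieSubalgebra.lieSpan_induction with
  | mem x hx =>
    obtain ⟨k, rfl⟩ := hx
    rw [← lie_skew]
    rcases eq_or_ne k j with rfl | hkj
    · rw [D.rel_ef_eq]
      exact Submodule.mem_sup_left (neg_mem (D.coroot_mem_grading_zero k))
    · rw [D.rel_ef_ne k j hkj, neg_zero]
      exact Submodule.zero_mem _
  | zero => rw [lie_zero]; exact Submodule.zero_mem _
  | add x y _ _ hx hy => rw [lie_add]; exact Submodule.add_mem _ hx hy
  | smul c x _ hx => rw [lie_smul]; exact Submodule.smul_mem _ c hx
  | lie x y hx' hy' hx hy =>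
    rw [leibniz_lie, ← lie_skew x]
    exact Submodule.mem_sup_right (D.nPlus.add_mem (D.lie_mem_nPlus_of_mem_sup hx hy')
      (neg_mem (D.lie_mem_nPlus_of_mem_sup hy hx')))

def triangular : Submodule ℂ L :=
  D.nPlus.toSubmodule ⊔ D.grading 0 ⊔ D.nMinus.toSubmodule

theorem op_triangular : D.op.triangular = D.triangular := by
  rw [triangular, triangular, op_grading_zero, op_nPlus, op_nMinus, sup_comm,
    sup_comm _ (D.grading 0), sup_assoc]

theorem lie_e_mem_triangular (i : I) {v : L} (hv : v ∈ D.triangular) :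
    ⁅D.e i, v⁆ ∈ D.triangular := by
  obtain ⟨ab, hab, c, hc, rfl⟩ := Submodule.mem_sup.1 hv
  obtain ⟨a, ha, b, hb, rfl⟩ := Submodule.mem_sup.1 hab
  have hc' := D.op.lie_f_mem_sup_nPlus i hc
  rw [op_grading_zero] at hc'
  have hle : D.grading 0 ⊔ D.nMinus.toSubmodule ≤ D.triangular := sup_le_sup_right le_sup_right _
  rw [lie_add, lie_add, ← lie_skew _ b]
  refine Submodule.add_mem _ (Submodule.add_mem _ ?_ ?_) (hle hc')
  · exact Submodule.mem_sup_left (Submodule.mem_sup_left (D.nPlus.lie_mem (D.e_mem_nPlus i) ha))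
  · exact Submodule.mem_sup_left (Submodule.mem_sup_left
      (neg_mem (D.lie_mem_nPlus_of_mem_grading_zero hb (D.e_mem_nPlus i))))

theorem triangular_eq_top : D.triangular = ⊤ := by
  have hf : ∀ i, ∀ v ∈ D.triangular, ⁅D.f i, v⁆ ∈ D.triangular := fun i v hv =>
    D.op_triangular ▸ D.op.lie_e_mem_triangular i (D.op_triangular ▸ hv)
  refine D.eq_top_of_generators_mem _ ?_ ?_ ?_ (fun i v => D.lie_e_mem_triangular i) hf ?_
  · exact fun i => Submodule.mem_sup_left (Submodule.mem_sup_left (D.e_mem_nPlus i))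
  · exact fun i => Submodule.mem_sup_right (D.op.e_mem_nPlus i)
  · exact fun i => Submodule.mem_sup_left (Submodule.mem_sup_right (D.coroot_mem_grading_zero i))
  · intro i v hv
    rw [← D.rel_ef_eq, lie_lie]
    exact Submodule.sub_mem _ (D.lie_e_mem_triangular i (hf i v hv))
      (hf i _ (D.lie_e_mem_triangular i hv))

def gradingHeightGE (m : ℤ) : Submodule ℂ L :=
  ⨆ q : {q : I →₀ ℤ // m ≤ Finsupp.degree q}, D.grading q

theorem gradingHeightGE_anti {m m' : ℤ} (h : m ≤ m') :
    D.gradingHeightGE m' ≤ D.gradingHeightGE m :=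
  iSup_le fun q => le_iSup_of_le (ι := {q : I →₀ ℤ // m ≤ Finsupp.degree q}) ⟨q, h.trans q.2⟩ le_rfl

theorem mem_gradingHeightGE {m : ℤ} {q : I →₀ ℤ} (hq : m ≤ q.degree) {x : L}
    (hx : x ∈ D.grading q) : x ∈ D.gradingHeightGE m :=
  Submodule.mem_iSup_of_mem (ι := {q : I →₀ ℤ // m ≤ Finsupp.degree q}) ⟨q, hq⟩ hx

theorem lie_mem_gradingHeightGE {m n : ℤ} {x y : L} (hx : x ∈ D.gradingHeightGE m)
    (hy : y ∈ D.gradingHeightGE n) : ⁅x, y⁆ ∈ D.gradingHeightGE (m + n) := by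
  induction hx using Submodule.iSup_induction' with
  | mem q x hx =>
    induction hy using Submodule.iSup_induction' with
    | mem r y hy =>
      refine D.mem_gradingHeightGE ?_ (D.grading_bracket _ _ _ hx _ hy)
      rw [map_add]
      exact add_le_add q.2 r.2
    | zero => rw [lie_zero]; exact Submodule.zero_mem _
    | add y y' _ _ hy hy' => rw [lie_add]; exact Submodule.add_mem _ hy hy'
  | zero => rw [zero_lie]; exact Submodule.zero_mem _
  | add x x' _ _ hx hx' => rw [add_lie]; exact Submodule.add_mem _ hx hx'

theorem nPlus_le_gradingHeightGE_one : D.nPlus.toSubmodule ≤ D.gradingHeightGE 1 := by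
  intro x hx
  induction hx using LieSubalgebra.lieSpan_induction with
  | mem x hx =>
    obtain ⟨j, rfl⟩ := hx
    exact D.mem_gradingHeightGE (by simp) (D.e_mem j)
  | zero => exact Submodule.zero_mem _
  | add x y _ _ hx hy => exact Submodule.add_mem _ hx hy
  | smul c x _ hx => exact Submodule.smul_mem _ c hx
  | lie x y _ _ hx hy =>
    exact D.gradingHeightGE_anti (by norm_num) (D.lie_mem_gradingHeightGE hx hy)

theorem nPlus_le_span_sup_gradingHeightGE_two :
    D.nPlus.toSubmodule ≤ Submodule.span ℂ (Set.range D.e) ⊔ D.gradingHeightGE 2 := by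
  intro x hx
  induction hx using LieSubalgebra.lieSpan_induction with
  | mem x hx => exact Submodule.mem_sup_left (Submodule.subset_span hx)
  | zero => exact Submodule.zero_mem _
  | add x y _ _ hx hy => exact Submodule.add_mem _ hx hy
  | smul c x _ hx => exact Submodule.smul_mem _ c hx
  | lie x y hx hy _ _ =>
    have := D.lie_mem_gradingHeightGE (D.nPlus_le_gradingHeightGE_one hx)
      (D.nPlus_le_gradingHeightGE_one hy)
    rw [one_add_one_eq_two] at this
    exact Submodule.mem_sup_right this

/-- Of `𝔫₊ + 𝔥' + 𝔫₋ = 𝔤'`, only the span of the `eⱼ` reaches degree `αᵢ`, and only through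
`eᵢ`. -/
theorem grading_single_le_span (i : I) : D.grading (Finsupp.single i 1) ≤ ℂ ∙ D.e i := by
  set W := ⨆ p, ⨆ (_ : p ≠ Finsupp.single i 1), D.grading p
  have hW : ∀ p, p.degree ≠ 1 → D.grading p ≤ W := fun p hp =>
    le_iSup₂_of_le p (fun h => hp (by simp [h])) le_rfl
  have hspan : Submodule.span ℂ (Set.range D.e) ≤ (ℂ ∙ D.e i) ⊔ W := by
    rw [Submodule.span_le]
    rintro _ ⟨j, rfl⟩
    rcases eq_or_ne j i with rfl | hji
    · exact Submodule.mem_sup_left (Submodule.mem_span_singleton_self _)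
    · refine Submodule.mem_sup_right
        (Submodule.mem_iSup_of_mem _ (Submodule.mem_iSup_of_mem ?_ (D.e_mem j)))
      exact fun h => hji (Finsupp.single_left_injective one_ne_zero h)
  have hnPlus : D.nPlus.toSubmodule ≤ (ℂ ∙ D.e i) ⊔ W :=
    D.nPlus_le_span_sup_gradingHeightGE_two.trans (sup_le hspan
      (le_sup_of_le_right (iSup_le fun q => hW q (by have := q.2; omega))))
  have hnMinus : D.nMinus.toSubmodule ≤ W :=
    D.op.nPlus_le_gradingHeightGE_one.trans (iSup_le fun q =>
      hW (-q.1) (by have := q.2; rw [map_neg]; omega))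
  have htop : ⊤ ≤ (ℂ ∙ D.e i) ⊔ W := by
    rw [← D.triangular_eq_top]
    exact sup_le (sup_le hnPlus (le_sup_of_le_right (hW 0 (by simp)))) (le_sup_of_le_right hnMinus)
  intro v hv
  obtain ⟨a, ha, w, hw, rfl⟩ := Submodule.mem_sup.1 (htop (Submodule.mem_top (x := v)))
  have ha' : a ∈ D.grading (Finsupp.single i 1) :=
    (Submodule.span_singleton_le_iff_mem _ _).2 (D.e_mem i) ha
  have hw0 : w = 0 := (Submodule.disjoint_def.1 (D.grading_internal.submodule_iSupIndep _)) w
    (by simpa using Submodule.sub_mem _ hv ha') hw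
  rwa [hw0, add_zero]

theorem coroot_mem_of_e_mem {J : LieIdeal ℂ L} {k : I} (hk : D.e k ∈ J) : D.coroot k ∈ J :=
  D.rel_ef_eq k ▸ lie_mem_left ℂ L J _ _ hk

theorem e_mem_of_coroot_mem {J : LieIdeal ℂ L} {k m : I} (hk : D.coroot k ∈ J)
    (hkm : A k m ≠ 0) : D.e m ∈ J := by
  have h := lie_mem_left ℂ L J _ (D.e m) hk
  rw [D.rel_he] at h
  exact (J.toSubmodule.smul_mem_iff (Int.cast_ne_zero.2 hkm)).1 h

theorem f_mem_of_coroot_mem (hA : IsGCM A) {J : LieIdeal ℂ L} {k : I} (hk : D.coroot k ∈ J) :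
    D.f k ∈ J := by
  have h := lie_mem_left ℂ L J _ (D.f k) hk
  rw [D.lie_coroot_f_self hA] at h
  exact (J.toSubmodule.smul_mem_iff (by norm_num)).1 h

theorem e_mem_of_isIndecomposable (hind : IsIndecomposable A) {J : LieIdeal ℂ L} {i : I}
    (hi : D.e i ∈ J) (k : I) : D.e k ∈ J := by
  by_contra hk
  obtain ⟨k', hk', m, hm, hkm⟩ := hind {k | D.e k ∈ J} ⟨i, hi⟩ ⟨k, hk⟩
  exact hm (D.e_mem_of_coroot_mem (D.coroot_mem_of_e_mem hk') hkm)

theorem eq_top_of_e_mem (hA : IsGCM A) (hind : IsIndecomposable A) {J : LieIdeal ℂ L} {i : I}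
    (hi : D.e i ∈ J) : J = ⊤ := by
  have he := D.e_mem_of_isIndecomposable hind hi
  rw [← LieSubmodule.toSubmodule_eq_top]
  exact D.eq_top_of_generators_mem _ he
    (fun k => D.f_mem_of_coroot_mem hA (D.coroot_mem_of_e_mem (he k)))
    (fun k => D.coroot_mem_of_e_mem (he k)) (fun _ _ => J.lie_mem) (fun _ _ => J.lie_mem)
    (fun _ _ => J.lie_mem)

theorem mem_center_of_mem_grading_zero_of_ne_top (hA : IsGCM A) (hind : IsIndecomposable A)
    {J : LieIdeal ℂ L} (hJ : J ≠ ⊤) {h : L} (hh : h ∈ J) (h0 : h ∈ D.grading 0) :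
    h ∈ LieAlgebra.center ℂ L := by
  refine D.mem_center_of_mem_grading_zero hA h0 fun i => ?_
  obtain ⟨c, hc, -⟩ := D.exists_lie_e_eq_smul h0 i
  rw [hc]
  by_contra hne
  have hci : ⁅D.e i, h⁆ ∈ J := J.lie_mem hh
  rw [← lie_skew, hc, neg_mem_iff] at hci
  exact hJ (D.eq_top_of_e_mem hA hind
    ((J.toSubmodule.smul_mem_iff (left_ne_zero_of_smul hne)).1 hci))

theorem lie_e_lie_f_e (hA : IsGCM A) (i : I) :
    ⁅D.e i, ⁅D.f i, D.e i⁆⁆ = (2 : ℂ) • D.e i := by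
  rw [← lie_skew (D.f i), D.rel_ef_eq, lie_neg, ← lie_skew, neg_neg, D.rel_he, hA.diag]
  norm_num

theorem eq_zero_of_mem_grading_single (hA : IsGCM A) {J : LieIdeal ℂ L}
    (hJ0 : ∀ h ∈ J, h ∈ D.grading 0 → h ∈ LieAlgebra.center ℂ L) {i : I} {v : L}
    (hv : v ∈ J) (hvi : v ∈ D.grading (Finsupp.single i 1)) : v = 0 := by
  obtain ⟨c, rfl⟩ := Submodule.mem_span_singleton.1 (D.grading_single_le_span i hvi)
  have hfv := hJ0 _ (J.lie_mem (x := D.f i) hv)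
    (by simpa using D.grading_bracket _ _ _ (D.f_mem i) _ hvi)
  have h2 := (LieModule.mem_maxTrivSubmodule _ _ _ _).1 hfv (D.e i)
  rw [lie_smul, lie_smul, D.lie_e_lie_f_e hA, smul_smul, smul_eq_zero] at h2
  rcases h2 with hc | he
  · rw [(mul_eq_zero.1 hc).resolve_right two_ne_zero, zero_smul]
  · rw [he, smul_zero]

end KM.DerivedKMData

open KM

/-- for a possibly infinite generalized Cartan matrix A:
(1) the centre of 𝔤'(A) is 𝔠'(A) = {h ∈ 𝔥'(A) : α_i(h) = 0 ∀ i} (the condition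
α_i(h) = 0 being expressed as [h, e_i] = 0); (2) if A is indecomposable, every proper
Q-graded ideal of 𝔤'(A) is contained in the centre. -/
theorem statement13 {I : Type*} (A : I → I → ℤ) (hA : IsGCM A)
    (L : Type*) [LieRing L] [LieAlgebra ℂ L] (D : DerivedKMData I A L) :
    ((LieAlgebra.center ℂ L : Set L)
      = {z : L | z ∈ D.grading 0 ∧ ∀ i, ⁅z, D.e i⁆ = 0}) ∧
    (IsIndecomposable A →
      ∀ J : LieIdeal ℂ L, D.IsGradedIdeal J → J ≠ ⊤ → J ≤ LieAlgebra.center ℂ L) := by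
  refine ⟨D.center_eq hA, fun hind J hJgr hJ => ?_⟩
  have hJ0 : ∀ h ∈ J, h ∈ D.grading 0 → h ∈ LieAlgebra.center ℂ L := fun h hh h0 =>
    D.mem_center_of_mem_grading_zero_of_ne_top hA hind hJ hh h0
  have hJ0op : ∀ h ∈ J, h ∈ D.op.grading 0 → h ∈ LieAlgebra.center ℂ L := by
    rwa [D.op_grading_zero]
  have hle := D.le_grading_zero_of_isGradedIdeal J hJgr
    (fun i v hv hvi => by rw [D.op.eq_zero_of_mem_grading_single hA hJ0op hv hvi, lie_zero])
    (fun i v hv hvi => by rw [D.eq_zero_of_mem_grading_single hA hJ0 hv hvi, lie_zero])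
  exact fun x hx => hJ0 x hx (hle hx)
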